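/- arXiv:2605.18510 — 6 statements merged into one kernel-verified Lean document; each statement's English description precedes it below -/
import Mathlib

section
/- Suppose 𝕌 is convex and (y, v, y⁺) ∈ S. Then for every x ∈ ℝⁿ with F x ≤ y there exists u ∈ 𝕌 such that F(A x + B u) ≤ y⁺, i.e., A x + B u ∈ P(y⁺). (Forward direction of Proposition 1: membership of (y, v, y⁺) in S guarantees one-step transferability of every point of P(y) into P(y⁺) with an admissible input.) -/
open Matrix

noncomputable section

variable {n nu nf ne nv : ℕ}

/-- The polytope `P(y) = {x | F x ≤ y}` (entrywise inequalities). -/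
def polySet (F : Matrix (Fin nf) (Fin n) ℝ) (y : Fin nf → ℝ) : Set (Fin n → ℝ) :=
  {x | F *ᵥ x ≤ y}

/-- The set `S` of triples `(y, v, y⁺)` from the paper. -/
def STriple (A : Matrix (Fin n) (Fin n) ℝ) (B : Matrix (Fin n) (Fin nu) ℝ)
    (X : Set (Fin n → ℝ)) (U : Set (Fin nu → ℝ))
    (F : Matrix (Fin nf) (Fin n) ℝ) (E : Matrix (Fin ne) (Fin nf) ℝ)
    (V : Fin nv → Matrix (Fin n) (Fin nf) ℝ) :
    Set ((Fin nf → ℝ) × (Fin nv → Fin nu → ℝ) × (Fin nf → ℝ)) :=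
  {p | E *ᵥ p.1 ≤ 0 ∧ ∀ i : Fin nv,
      F *ᵥ (A *ᵥ ((V i) *ᵥ p.1) + B *ᵥ (p.2.1 i)) ≤ p.2.2 ∧
      (V i) *ᵥ p.1 ∈ X ∧ p.2.1 i ∈ U}

/-- The set `Y_LQR` of parameters of invariant cc-polytopes for the LQR feedback. -/
def YLQR (A : Matrix (Fin n) (Fin n) ℝ) (B : Matrix (Fin n) (Fin nu) ℝ)
    (K : Matrix (Fin nu) (Fin n) ℝ)
    (X : Set (Fin n → ℝ)) (U : Set (Fin nu → ℝ))
    (F : Matrix (Fin nf) (Fin n) ℝ) (E : Matrix (Fin ne) (Fin nf) ℝ)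
    (V : Fin nv → Matrix (Fin n) (Fin nf) ℝ) : Set (Fin nf → ℝ) :=
  {ys | E *ᵥ ys ≤ 0 ∧ ∀ i : Fin nv,
      F *ᵥ ((A + B * K) *ᵥ ((V i) *ᵥ ys)) ≤ ys ∧
      (V i) *ᵥ ys ∈ X ∧ K *ᵥ ((V i) *ᵥ ys) ∈ U}

/-- The terminal region `T(β)`. -/
def TSet (β : ℝ) (A : Matrix (Fin n) (Fin n) ℝ) (B : Matrix (Fin n) (Fin nu) ℝ)
    (K : Matrix (Fin nu) (Fin n) ℝ)
    (X : Set (Fin n → ℝ)) (U : Set (Fin nu → ℝ))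
    (F : Matrix (Fin nf) (Fin n) ℝ) (E : Matrix (Fin ne) (Fin nf) ℝ)
    (V : Fin nv → Matrix (Fin n) (Fin nf) ℝ) : Set (Fin n → ℝ) :=
  {x | ∃ (y ys : Fin nf → ℝ) (vv : Fin nv → Fin nu → ℝ),
      F *ᵥ x ≤ y ∧ ys ∈ YLQR A B K X U F E V ∧
      (y, vv, ys + β • (y - ys)) ∈ STriple A B X U F E V}

/-- The set `T̂_LQR`, the union of all invariant cc-polytopes for the LQR feedback. -/
def THatLQR (A : Matrix (Fin n) (Fin n) ℝ) (B : Matrix (Fin n) (Fin nu) ℝ)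
    (K : Matrix (Fin nu) (Fin n) ℝ)
    (X : Set (Fin n → ℝ)) (U : Set (Fin nu → ℝ))
    (F : Matrix (Fin nf) (Fin n) ℝ) (E : Matrix (Fin ne) (Fin nf) ℝ)
    (V : Fin nv → Matrix (Fin n) (Fin nf) ℝ) : Set (Fin n → ℝ) :=
  {x | ∃ ys ∈ YLQR A B K X U F E V, F *ᵥ x ≤ ys}

/-- The piecewise quadratic terminal cost `m(x)`, as an infimum in `ℝ ∪ {±∞}`
(the infimum over the empty set is `+∞`). -/
def mcost (β : ℝ) (A : Matrix (Fin n) (Fin n) ℝ) (B : Matrix (Fin n) (Fin nu) ℝ)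
    (K : Matrix (Fin nu) (Fin n) ℝ)
    (X : Set (Fin n → ℝ)) (U : Set (Fin nu → ℝ))
    (F : Matrix (Fin nf) (Fin n) ℝ) (E : Matrix (Fin ne) (Fin nf) ℝ)
    (V : Fin nv → Matrix (Fin n) (Fin nf) ℝ)
    (P : Matrix (Fin n) (Fin n) ℝ) (Γ : Matrix (Fin nf) (Fin nf) ℝ)
    (Θ : Matrix (Fin nu) (Fin nu) ℝ) (x : Fin n → ℝ) : EReal :=
  sInf {c : EReal | ∃ (y ys : Fin nf → ℝ) (vv : Fin nv → Fin nu → ℝ),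
    F *ᵥ x ≤ y ∧ ys ∈ YLQR A B K X U F E V ∧
    (y, vv, ys + β • (y - ys)) ∈ STriple A B X U F E V ∧
    c = ((x ⬝ᵥ (P *ᵥ x) + (y - ys) ⬝ᵥ (Γ *ᵥ (y - ys)) +
      ∑ i : Fin nv, ((vv i - K *ᵥ ((V i) *ᵥ y)) ⬝ᵥ
        (Θ *ᵥ (vv i - K *ᵥ ((V i) *ᵥ y)))) : ℝ) : EReal)}

/-- The quadratic stage cost `ℓ(x,u) = xᵀQx + 2xᵀSu + uᵀRu`. -/
def stageCost (Q : Matrix (Fin n) (Fin n) ℝ) (Sm : Matrix (Fin n) (Fin nu) ℝ)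
    (R : Matrix (Fin nu) (Fin nu) ℝ) (x : Fin n → ℝ) (u : Fin nu → ℝ) : ℝ :=
  x ⬝ᵥ (Q *ᵥ x) + 2 * (x ⬝ᵥ (Sm *ᵥ u)) + u ⬝ᵥ (R *ᵥ u)

/-- `(P, K)` is a Riccati pair: `P` symmetric, the LQR gain relation, and the DARE. -/
def IsRiccatiPair (A : Matrix (Fin n) (Fin n) ℝ) (B : Matrix (Fin n) (Fin nu) ℝ)
    (Q : Matrix (Fin n) (Fin n) ℝ) (Sm : Matrix (Fin n) (Fin nu) ℝ)
    (R : Matrix (Fin nu) (Fin nu) ℝ)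
    (P : Matrix (Fin n) (Fin n) ℝ) (K : Matrix (Fin nu) (Fin n) ℝ) : Prop :=
  P.IsSymm ∧ (R + Bᵀ * P * B) * K = -(Aᵀ * P * B + Sm)ᵀ ∧
    P = Aᵀ * P * A + Q + (Aᵀ * P * B + Sm) * K

/-- forward direction of Proposition 1. -/
theorem prop1_forward
    (A : Matrix (Fin n) (Fin n) ℝ) (B : Matrix (Fin n) (Fin nu) ℝ)
    (X : Set (Fin n → ℝ)) (U : Set (Fin nu → ℝ))
    (F : Matrix (Fin nf) (Fin n) ℝ) (E : Matrix (Fin ne) (Fin nf) ℝ)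
    (V : Fin nv → Matrix (Fin n) (Fin nf) ℝ)
    (hU : Convex ℝ U)
    (hFEV : ∀ y : Fin nf → ℝ,
      polySet F y = convexHull ℝ (Set.range fun i => (V i) *ᵥ y) ↔ E *ᵥ y ≤ 0)
    (y yp : Fin nf → ℝ) (vv : Fin nv → Fin nu → ℝ)
    (hS : (y, vv, yp) ∈ STriple A B X U F E V) :
    ∀ x : Fin n → ℝ, F *ᵥ x ≤ y →
      ∃ u ∈ U, F *ᵥ (A *ᵥ x + B *ᵥ u) ≤ yp := by
  intro x hx
  have hx' : x ∈ convexHull ℝ (Set.range fun i => (V i) *ᵥ y) := by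
    rw [← (hFEV y).mpr hS.1]; exact hx
  obtain ⟨ι, _, w, z, hw0, hw1, hz, hxe⟩ := mem_convexHull_iff_exists_fintype.mp hx'
  choose g hg using hz
  refine ⟨∑ i, w i • vv (g i), ?_, ?_⟩
  · exact hU.sum_mem (fun i _ => hw0 i) hw1 (fun i _ => (hS.2 (g i)).2.2)
  · have hxs : x = ∑ i, w i • ((V (g i)) *ᵥ y) := by
      rw [← hxe]
      exact Finset.sum_congr rfl fun i _ => by rw [← hg i]
    have key : F *ᵥ (A *ᵥ x + B *ᵥ (∑ i, w i • vv (g i)))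
        = ∑ i, w i • (F *ᵥ (A *ᵥ ((V (g i)) *ᵥ y) + B *ᵥ vv (g i))) := by
      rw [hxs]
      simp only [Matrix.mulVec_add, Matrix.mulVec_smul, ← Matrix.mulVecLin_apply, map_sum,
        _root_.map_smul, map_add]
      rw [← Finset.sum_add_distrib]
      exact Finset.sum_congr rfl fun i _ => by simp [smul_add]
    rw [key]
    intro k
    calc (∑ i, w i • (F *ᵥ (A *ᵥ ((V (g i)) *ᵥ y) + B *ᵥ vv (g i)))) k
        = ∑ i, w i * (F *ᵥ (A *ᵥ ((V (g i)) *ᵥ y) + B *ᵥ vv (g i))) k := by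
          simp [Finset.sum_apply]
      _ ≤ ∑ i, w i * yp k := Finset.sum_le_sum fun i _ =>
          mul_le_mul_of_nonneg_left ((hS.2 (g i)).1 k) (hw0 i)
      _ = yp k := by rw [← Finset.sum_mul, hw1, one_mul]
end
end

section
/- Suppose 𝕏 and 𝕌 are convex and y_s ∈ Y_LQR. Then every x ∈ P(y_s) satisfies x ∈ 𝕏, K x ∈ 𝕌, and (A + B K) x ∈ P(y_s); that is, P(y_s) is contained in the state constraint set and is positively invariant under the linear feedback law u = K x with admissible inputs. -/
open Matrix

noncomputable section

variable {n nu nf ne nv : ℕ}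

/-- `P(y_s)` is inside the state constraints and positively invariant
under `u = K x` with admissible inputs, for any `y_s ∈ Y_LQR`. -/
theorem polySet_posInvariant_of_mem_YLQR
    (A : Matrix (Fin n) (Fin n) ℝ) (B : Matrix (Fin n) (Fin nu) ℝ)
    (K : Matrix (Fin nu) (Fin n) ℝ)
    (X : Set (Fin n → ℝ)) (U : Set (Fin nu → ℝ))
    (F : Matrix (Fin nf) (Fin n) ℝ) (E : Matrix (Fin ne) (Fin nf) ℝ)
    (V : Fin nv → Matrix (Fin n) (Fin nf) ℝ)
    (hX : Convex ℝ X) (hU : Convex ℝ U)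
    (hFEV : ∀ y : Fin nf → ℝ,
      polySet F y = convexHull ℝ (Set.range fun i => (V i) *ᵥ y) ↔ E *ᵥ y ≤ 0)
    (ys : Fin nf → ℝ) (hys : ys ∈ YLQR A B K X U F E V) :
    ∀ x : Fin n → ℝ, F *ᵥ x ≤ ys →
      x ∈ X ∧ K *ᵥ x ∈ U ∧ F *ᵥ ((A + B * K) *ᵥ x) ≤ ys := by
  intro x hx
  have hE : polySet F ys = convexHull ℝ (Set.range fun i => (V i) *ᵥ ys) :=
    (hFEV ys).mpr hys.1
  have hxhull : x ∈ convexHull ℝ (Set.range fun i => (V i) *ᵥ ys) := by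
    rw [← hE]; exact hx
  set C : Set (Fin n → ℝ) :=
    {z | z ∈ X ∧ K *ᵥ z ∈ U ∧ F *ᵥ ((A + B * K) *ᵥ z) ≤ ys} with hC
  have hCconv : Convex ℝ C := by
    intro a ha b hb s t hs ht hst
    refine ⟨hX ha.1 hb.1 hs ht hst, ?_, ?_⟩
    · have : K *ᵥ (s • a + t • b) = s • (K *ᵥ a) + t • (K *ᵥ b) := by
        simp [Matrix.mulVec_add, Matrix.mulVec_smul]
      rw [this]
      exact hU ha.2.1 hb.2.1 hs ht hst
    · have h1 := ha.2.2
      have h2 := hb.2.2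
      intro j
      have e1 : F *ᵥ ((A + B * K) *ᵥ (s • a + t • b)) =
          s • (F *ᵥ ((A + B * K) *ᵥ a)) + t • (F *ᵥ ((A + B * K) *ᵥ b)) := by
        simp [Matrix.mulVec_add, Matrix.mulVec_smul]
      rw [e1]
      have := add_le_add (mul_le_mul_of_nonneg_left (h1 j) hs)
        (mul_le_mul_of_nonneg_left (h2 j) ht)
      simpa [smul_eq_mul, ← add_mul, hst] using this
  have hsub : Set.range (fun i => (V i) *ᵥ ys) ⊆ C := by
    rintro _ ⟨i, rfl⟩
    obtain ⟨h1, h2, h3⟩ := hys.2 i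
    exact ⟨h2, h3, h1⟩
  have hxC : x ∈ C := convexHull_min hsub hCconv hxhull
  exact hxC
end
end

section
/- If 𝕏 and 𝕌 are convex, then for every β ∈ [0, 1] the set T(β) is convex. (Part of Lemma 1, statement 1.) -/
open Matrix

noncomputable section

variable {n nu nf ne nv : ℕ}

private lemma comb_le {k : ℕ} {a b : ℝ} (ha : 0 ≤ a) (hb : 0 ≤ b)
    {u1 u2 w1 w2 : Fin k → ℝ} (h1 : u1 ≤ w1) (h2 : u2 ≤ w2) :
    a • u1 + b • u2 ≤ a • w1 + b • w2 := by
  intro j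
  exact add_le_add (mul_le_mul_of_nonneg_left (h1 j) ha)
    (mul_le_mul_of_nonneg_left (h2 j) hb)

/-- convexity of `T(β)` (part of Lemma 1, statement 1). -/
theorem TSet_convex
    (A : Matrix (Fin n) (Fin n) ℝ) (B : Matrix (Fin n) (Fin nu) ℝ)
    (K : Matrix (Fin nu) (Fin n) ℝ)
    (X : Set (Fin n → ℝ)) (U : Set (Fin nu → ℝ))
    (F : Matrix (Fin nf) (Fin n) ℝ) (E : Matrix (Fin ne) (Fin nf) ℝ)
    (V : Fin nv → Matrix (Fin n) (Fin nf) ℝ)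
    (hX : Convex ℝ X) (hU : Convex ℝ U) :
    ∀ β : ℝ, 0 ≤ β → β ≤ 1 → Convex ℝ (TSet β A B K X U F E V) := by
  intro β hβ0 hβ1 x₁ hx₁ x₂ hx₂ a b ha hb hab
  obtain ⟨y₁, ys₁, vv₁, hFx₁, ⟨hE₁, hQ₁⟩, hES₁, hS₁⟩ := hx₁
  obtain ⟨y₂, ys₂, vv₂, hFx₂, ⟨hE₂, hQ₂⟩, hES₂, hS₂⟩ := hx₂
  refine ⟨a • y₁ + b • y₂, a • ys₁ + b • ys₂, a • vv₁ + b • vv₂, ?_, ⟨?_, ?_⟩, ?_, ?_⟩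
  · simpa [Matrix.mulVec_add, Matrix.mulVec_smul] using comb_le ha hb hFx₁ hFx₂
  · simpa [Matrix.mulVec_add, Matrix.mulVec_smul] using comb_le ha hb hE₁ hE₂
  · intro i
    obtain ⟨h1a, h1b, h1c⟩ := hQ₁ i
    obtain ⟨h2a, h2b, h2c⟩ := hQ₂ i
    refine ⟨?_, ?_, ?_⟩
    · simpa [Matrix.mulVec_add, Matrix.mulVec_smul] using comb_le ha hb h1a h2a
    · simpa [Matrix.mulVec_add, Matrix.mulVec_smul] using hX h1b h2b ha hb hab
    · simpa [Matrix.mulVec_add, Matrix.mulVec_smul] using hU h1c h2c ha hb hab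
  · simpa [Matrix.mulVec_add, Matrix.mulVec_smul] using comb_le ha hb hES₁ hES₂
  · intro i
    obtain ⟨h1a, h1b, h1c⟩ := hS₁ i
    obtain ⟨h2a, h2b, h2c⟩ := hS₂ i
    refine ⟨?_, ?_, ?_⟩
    · have key : (a • ys₁ + b • ys₂) + β • ((a • y₁ + b • y₂) - (a • ys₁ + b • ys₂))
          = a • (ys₁ + β • (y₁ - ys₁)) + b • (ys₂ + β • (y₂ - ys₂)) := by
        module
      rw [key]
      have := comb_le ha hb h1a h2a
      simpa [Matrix.mulVec_add, Matrix.mulVec_smul, Pi.add_apply, Pi.smul_apply,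
        add_assoc, add_comm, add_left_comm] using this
    · simpa [Matrix.mulVec_add, Matrix.mulVec_smul] using hX h1b h2b ha hb hab
    · exact hU h1c h2c ha hb hab
end
end

section
/- Suppose 𝕏 and 𝕌 are convex and β ∈ [0, 1]. Then T(β) is control invariant: for every x ∈ T(β) there exists u ∈ 𝕌 such that A x + B u ∈ T(β). (Part of Lemma 1, statement 1.) -/
open Matrix

noncomputable section

variable {n nu nf ne nv : ℕ}

lemma mulVec_finsum {k l : ℕ} (M : Matrix (Fin k) (Fin l) ℝ) {ι : Type*} (t : Finset ι)
    (f : ι → (Fin l → ℝ)) : M *ᵥ (∑ j ∈ t, f j) = ∑ j ∈ t, M *ᵥ f j := by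
  exact map_sum M.mulVecLin f t

/-- `T(β)` is control invariant (part of Lemma 1, statement 1). -/
theorem TSet_controlInvariant
    (A : Matrix (Fin n) (Fin n) ℝ) (B : Matrix (Fin n) (Fin nu) ℝ)
    (K : Matrix (Fin nu) (Fin n) ℝ)
    (X : Set (Fin n → ℝ)) (U : Set (Fin nu → ℝ))
    (F : Matrix (Fin nf) (Fin n) ℝ) (E : Matrix (Fin ne) (Fin nf) ℝ)
    (V : Fin nv → Matrix (Fin n) (Fin nf) ℝ)
    (hX : Convex ℝ X) (hU : Convex ℝ U)
    (hFEV : ∀ y : Fin nf → ℝ,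
      polySet F y = convexHull ℝ (Set.range fun i => (V i) *ᵥ y) ↔ E *ᵥ y ≤ 0)
    (β : ℝ) (hβ0 : 0 ≤ β) (hβ1 : β ≤ 1) :
    ∀ x ∈ TSet β A B K X U F E V,
      ∃ u ∈ U, A *ᵥ x + B *ᵥ u ∈ TSet β A B K X U F E V := by
  rintro x ⟨y, ys, vv, hFx, hys, hEy, hS⟩
  obtain ⟨hEys, hL⟩ := hys
  -- x lies in the convex hull of the vertices V i *ᵥ y
  have hxhull : x ∈ convexHull ℝ (Set.range fun i => (V i) *ᵥ y) := by
    rw [← (hFEV y).2 hEy]; exact hFx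
  rw [convexHull_eq] at hxhull
  obtain ⟨ι, t, w, z, hw0, hw1, hz, hx⟩ := hxhull
  rw [Finset.centerMass_eq_of_sum_1 _ _ hw1] at hx
  -- choose vertex indices
  have hchoice : ∀ j : {j // j ∈ t}, ∃ i : Fin nv, (V i) *ᵥ y = z j := by
    rintro ⟨j, hj⟩
    obtain ⟨i, hi⟩ := hz j hj
    exact ⟨i, hi⟩
  choose g hg using hchoice
  set y' : Fin nf → ℝ := ys + β • (y - ys) with hy'def
  have hy' : y' = (1 - β) • ys + β • y := by
    rw [hy'def]; module
  -- the control input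
  refine ⟨∑ j ∈ t.attach, w j • vv (g j), ?_, ?_⟩
  · exact hU.sum_mem (fun j _ => hw0 j j.2) (by rw [Finset.sum_attach]; exact hw1)
      (fun j _ => (hS (g j)).2.2)
  -- the successor state as a convex combination
  have hxplus : A *ᵥ x + B *ᵥ (∑ j ∈ t.attach, w j • vv (g j)) =
      ∑ j ∈ t.attach, w j • (A *ᵥ ((V (g j)) *ᵥ y) + B *ᵥ vv (g j)) := by
    have hx' : x = ∑ j ∈ t.attach, w j • ((V (g j)) *ᵥ y) := by
      rw [← hx, ← Finset.sum_attach t (fun j => w j • z j)]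
      exact Finset.sum_congr rfl fun j _ => by rw [hg]
    rw [hx', mulVec_finsum, mulVec_finsum]
    rw [← Finset.sum_add_distrib]
    refine Finset.sum_congr rfl fun j _ => ?_
    rw [Matrix.mulVec_smul, Matrix.mulVec_smul, smul_add]
  have hw1' : ∑ j ∈ t.attach, w j = 1 := by rw [Finset.sum_attach]; exact hw1
  -- F x⁺ ≤ y'
  have hFxp : F *ᵥ (A *ᵥ x + B *ᵥ (∑ j ∈ t.attach, w j • vv (g j))) ≤ y' := by
    rw [hxplus, mulVec_finsum]
    calc ∑ j ∈ t.attach, F *ᵥ (w j • (A *ᵥ ((V (g j)) *ᵥ y) + B *ᵥ vv (g j)))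
        ≤ ∑ j ∈ t.attach, w j • y' := by
          refine Finset.sum_le_sum fun j _ => ?_
          rw [Matrix.mulVec_smul]
          exact smul_le_smul_of_nonneg_left ((hS (g j)).1) (hw0 j j.2)
      _ = y' := by rw [← Finset.sum_smul, hw1', one_smul]
  refine ⟨y', ys, fun i => (1 - β) • (K *ᵥ ((V i) *ᵥ ys)) + β • vv i, hFxp,
    ⟨hEys, hL⟩, ?_, ?_⟩
  · -- E y' ≤ 0
    rw [hy', Matrix.mulVec_add, Matrix.mulVec_smul, Matrix.mulVec_smul]
    have h1 : (1 - β) • (E *ᵥ ys) ≤ (1 - β) • (0 : Fin ne → ℝ) :=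
      smul_le_smul_of_nonneg_left hEys (by linarith)
    have h2 : β • (E *ᵥ y) ≤ β • (0 : Fin ne → ℝ) :=
      smul_le_smul_of_nonneg_left hEy hβ0
    simpa using add_le_add h1 h2
  intro i
  have hVy' : (V i) *ᵥ y' = (1 - β) • ((V i) *ᵥ ys) + β • ((V i) *ᵥ y) := by
    rw [hy', Matrix.mulVec_add, Matrix.mulVec_smul, Matrix.mulVec_smul]
  refine ⟨?_, ?_, ?_⟩
  · -- dynamics inequality
    have hdyn : A *ᵥ ((V i) *ᵥ y') + B *ᵥ ((1 - β) • (K *ᵥ ((V i) *ᵥ ys)) + β • vv i) =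
        (1 - β) • ((A + B * K) *ᵥ ((V i) *ᵥ ys)) + β • (A *ᵥ ((V i) *ᵥ y) + B *ᵥ vv i) := by
      rw [hVy', Matrix.add_mulVec, Matrix.mulVec_add, Matrix.mulVec_smul, Matrix.mulVec_smul,
        Matrix.mulVec_add, Matrix.mulVec_smul, Matrix.mulVec_smul, ← Matrix.mulVec_mulVec]
      module
    rw [hdyn, Matrix.mulVec_add, Matrix.mulVec_smul, Matrix.mulVec_smul]
    have h1 : (1 - β) • (F *ᵥ ((A + B * K) *ᵥ ((V i) *ᵥ ys))) ≤ (1 - β) • ys :=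
      smul_le_smul_of_nonneg_left ((hL i).1) (by linarith)
    have h2 : β • (F *ᵥ (A *ᵥ ((V i) *ᵥ y) + B *ᵥ vv i)) ≤ β • (ys + β • (y - ys)) :=
      smul_le_smul_of_nonneg_left ((hS i).1) hβ0
    have h3 := add_le_add h1 h2
    have heq : (1 - β) • ys + β • (ys + β • (y - ys)) = ys + β • (y' - ys) := by
      rw [hy'def]; module
    rwa [heq] at h3
  · rw [hVy']
    exact hX (hL i).2.1 (hS i).2.1 (by linarith) hβ0 (by ring)
  · exact hU (hL i).2.2 (hS i).2.2 (by linarith) hβ0 (by ring)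
end
end

section
/- Suppose 𝕏 and 𝕌 are convex, β ∈ [0, 1], and P, Γ, Θ are symmetric positive semidefinite. Then on T(β) the function m is real-valued (finite) and convex: for all x₁, x₂ ∈ T(β) and t ∈ [0, 1], m(t x₁ + (1−t) x₂) ≤ t m(x₁) + (1−t) m(x₂). (Proposition 2, statement 1.) -/
open Matrix

noncomputable section

variable {n nu nf ne nv : ℕ}

/-!
In the variables `(x, y, y_s, v)` every constraint defining `m` is linear or asks a linear image
to lie in `𝕏` or `𝕌`, so the feasible set is convex, and the objective is a sum of positive
semidefinite quadratic forms of linear maps, hence jointly convex and nonnegative. The cost `m`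
is the infimum of this objective over the fibres of the feasible set above `x`, and `T(β)` is
the projection of that set, so `m` is finite on `T(β)`; the infimal projection of a jointly
convex function over a convex set is convex.
-/

open Set

theorem Matrix.PosSemidef.convexOn_dotProduct_mulVec {ι : Type*} [Fintype ι]
    {M : Matrix ι ι ℝ} (hM : M.PosSemidef) : ConvexOn ℝ univ fun z : ι → ℝ => z ⬝ᵥ (M *ᵥ z) := by
  refine ⟨convex_univ, fun x _ y _ a b ha hb hab => ?_⟩
  -- `a q(x) + b q(y) - q(a x + b y) = a b q(x - y)` when `a + b = 1`
  have hxy := mul_nonneg (mul_nonneg ha hb) (hM.dotProduct_mulVec_nonneg (x - y))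
  simp only [star_trivial, mulVec_sub, sub_dotProduct, dotProduct_sub] at hxy
  simp only [smul_eq_mul, mulVec_add, mulVec_smul, dotProduct_add, add_dotProduct,
    smul_dotProduct, dotProduct_smul]
  obtain rfl : b = 1 - a := by linarith
  nlinarith

theorem ConvexOn.fun_sum {𝕜 E β ι : Type*} [Semiring 𝕜] [PartialOrder 𝕜] [AddCommMonoid E]
    [AddCommMonoid β] [PartialOrder β] [IsOrderedAddMonoid β] [SMul 𝕜 E] [Module 𝕜 β]
    [PosSMulMono 𝕜 β] {s : Set E} (hs : Convex 𝕜 s) {t : Finset ι} {f : ι → E → β}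
    (hf : ∀ i ∈ t, ConvexOn 𝕜 s (f i)) : ConvexOn 𝕜 s fun x => ∑ i ∈ t, f i x := by
  classical
  induction t using Finset.induction_on with
  | empty => simpa using convexOn_const 0 hs
  | insert i t hi ih =>
    simp only [Finset.sum_insert hi]
    exact (hf i (t.mem_insert_self i)).add (ih fun j hj => hf j (Finset.mem_insert_of_mem hj))

theorem EReal.coe_ciInf {ι : Sort*} [Nonempty ι] {f : ι → ℝ} (hf : BddBelow (range f)) :
    ((⨅ i, f i : ℝ) : EReal) = ⨅ i, (f i : EReal) :=
  Monotone.map_ciInf_of_continuousAt continuous_coe_real_ereal.continuousAt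
    EReal.coe_strictMono.monotone hf

theorem BddBelow.range_fiber {E W α : Type*} [Preorder α] {C : Set (E × W)} {f : E × W → α}
    (hbdd : BddBelow (f '' C)) (x : E) :
    BddBelow (range fun w : {w // (x, w) ∈ C} => f (x, w)) :=
  hbdd.mono (range_subset_iff.2 fun w => mem_image_of_mem f w.2)

section InfimalProjection

variable {E W : Type*} [AddCommGroup E] [Module ℝ E] [AddCommGroup W] [Module ℝ W]
  {C : Set (E × W)} {f : E × W → ℝ}

theorem ConvexOn.iInf_fiber (hf : ConvexOn ℝ C f) (hbdd : BddBelow (f '' C)) :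
    ConvexOn ℝ (Prod.fst '' C) fun x => ⨅ w : {w // (x, w) ∈ C}, f (x, w) := by
  refine ⟨hf.1.linear_image (LinearMap.fst ℝ E W), ?_⟩
  rintro _ ⟨⟨x₁, w₁⟩, h₁, rfl⟩ _ ⟨⟨x₂, w₂⟩, h₂, rfl⟩ a b ha hb hab
  have : Nonempty {w // (x₁, w) ∈ C} := ⟨⟨w₁, h₁⟩⟩
  have : Nonempty {w // (x₂, w) ∈ C} := ⟨⟨w₂, h₂⟩⟩
  simp only [smul_eq_mul, Real.mul_iInf_of_nonneg ha, Real.mul_iInf_of_nonneg hb]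
  refine le_ciInf_add_ciInf fun v₁ v₂ => ?_
  exact (ciInf_le (hbdd.range_fiber _) ⟨a • v₁.1 + b • v₂.1, hf.1 v₁.2 v₂.2 ha hb hab⟩).trans
    (hf.2 v₁.2 v₂.2 ha hb hab)

end InfimalProjection

section TerminalCost

variable (A : Matrix (Fin n) (Fin n) ℝ) (B : Matrix (Fin n) (Fin nu) ℝ)
  (K : Matrix (Fin nu) (Fin n) ℝ) (X : Set (Fin n → ℝ)) (U : Set (Fin nu → ℝ))
  (F : Matrix (Fin nf) (Fin n) ℝ) (E : Matrix (Fin ne) (Fin nf) ℝ)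
  (V : Fin nv → Matrix (Fin n) (Fin nf) ℝ)

/-- Points are `(x, y, y_s, v)`; `mcost` at `x` is the infimum of `mcostObjective` over the fibre
of this set above `x`. -/
def mcostFeasible (β : ℝ) :
    Set ((Fin n → ℝ) × (Fin nf → ℝ) × (Fin nf → ℝ) × (Fin nv → Fin nu → ℝ)) :=
  {p | F *ᵥ p.1 ≤ p.2.1 ∧ p.2.2.1 ∈ YLQR A B K X U F E V ∧
    (p.2.1, p.2.2.2, p.2.2.1 + β • (p.2.1 - p.2.2.1)) ∈ STriple A B X U F E V}

def mcostObjective (P : Matrix (Fin n) (Fin n) ℝ) (Γ : Matrix (Fin nf) (Fin nf) ℝ)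
    (Θ : Matrix (Fin nu) (Fin nu) ℝ)
    (p : (Fin n → ℝ) × (Fin nf → ℝ) × (Fin nf → ℝ) × (Fin nv → Fin nu → ℝ)) : ℝ :=
  p.1 ⬝ᵥ (P *ᵥ p.1) + (p.2.1 - p.2.2.1) ⬝ᵥ (Γ *ᵥ (p.2.1 - p.2.2.1)) +
    ∑ i, (p.2.2.2 i - K *ᵥ (V i *ᵥ p.2.1)) ⬝ᵥ (Θ *ᵥ (p.2.2.2 i - K *ᵥ (V i *ᵥ p.2.1)))

variable {X U}

theorem convex_STriple (hX : Convex ℝ X) (hU : Convex ℝ U) :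
    Convex ℝ (STriple A B X U F E V) := by
  rintro ⟨y₁, v₁, z₁⟩ ⟨hE₁, h₁⟩ ⟨y₂, v₂, z₂⟩ ⟨hE₂, h₂⟩ a b ha hb hab
  refine ⟨?_, fun i => ⟨?_, ?_, ?_⟩⟩
  · simpa [mulVec_add, mulVec_smul] using convex_Iic 0 hE₁ hE₂ ha hb hab
  · calc F *ᵥ (A *ᵥ V i *ᵥ (a • y₁ + b • y₂) + B *ᵥ (a • v₁ i + b • v₂ i))
        = a • F *ᵥ (A *ᵥ V i *ᵥ y₁ + B *ᵥ v₁ i) + b • F *ᵥ (A *ᵥ V i *ᵥ y₂ + B *ᵥ v₂ i) := by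
          simp only [mulVec_add, mulVec_smul]; module
      _ ≤ a • z₁ + b • z₂ := add_le_add (smul_le_smul_of_nonneg_left (h₁ i).1 ha)
          (smul_le_smul_of_nonneg_left (h₂ i).1 hb)
  · simpa [mulVec_add, mulVec_smul] using hX (h₁ i).2.1 (h₂ i).2.1 ha hb hab
  · simpa using hU (h₁ i).2.2 (h₂ i).2.2 ha hb hab

theorem convex_YLQR (hX : Convex ℝ X) (hU : Convex ℝ U) :
    Convex ℝ (YLQR A B K X U F E V) := by
  rintro y₁ ⟨hE₁, h₁⟩ y₂ ⟨hE₂, h₂⟩ a b ha hb hab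
  refine ⟨?_, fun i => ⟨?_, ?_, ?_⟩⟩
  · simpa [mulVec_add, mulVec_smul] using convex_Iic 0 hE₁ hE₂ ha hb hab
  · simpa [mulVec_add, mulVec_smul] using add_le_add (smul_le_smul_of_nonneg_left (h₁ i).1 ha)
      (smul_le_smul_of_nonneg_left (h₂ i).1 hb)
  · simpa [mulVec_add, mulVec_smul] using hX (h₁ i).2.1 (h₂ i).2.1 ha hb hab
  · simpa [mulVec_add, mulVec_smul] using hU (h₁ i).2.2 (h₂ i).2.2 ha hb hab

theorem convex_mcostFeasible (hX : Convex ℝ X) (hU : Convex ℝ U) (β : ℝ) :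
    Convex ℝ (mcostFeasible A B K X U F E V β) := by
  rintro ⟨x₁, y₁, s₁, v₁⟩ ⟨hF₁, hY₁, hS₁⟩ ⟨x₂, y₂, s₂, v₂⟩ ⟨hF₂, hY₂, hS₂⟩ a b ha hb hab
  refine ⟨?_, convex_YLQR A B K F E V hX hU hY₁ hY₂ ha hb hab, ?_⟩
  · simpa [mulVec_add, mulVec_smul] using add_le_add (smul_le_smul_of_nonneg_left hF₁ ha)
      (smul_le_smul_of_nonneg_left hF₂ hb)
  · convert convex_STriple A B F E V hX hU hS₁ hS₂ ha hb hab using 1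
    simp only [Prod.smul_mk, Prod.mk_add_mk]
    congr 2
    module

theorem convexOn_mcostObjective {P : Matrix (Fin n) (Fin n) ℝ} {Γ : Matrix (Fin nf) (Fin nf) ℝ}
    {Θ : Matrix (Fin nu) (Fin nu) ℝ} (hP : P.PosSemidef) (hΓ : Γ.PosSemidef)
    (hΘ : Θ.PosSemidef) : ConvexOn ℝ univ (mcostObjective K V P Γ Θ) := by
  let x := LinearMap.fst ℝ (Fin n → ℝ) ((Fin nf → ℝ) × (Fin nf → ℝ) × (Fin nv → Fin nu → ℝ))
  let w := LinearMap.snd ℝ (Fin n → ℝ) ((Fin nf → ℝ) × (Fin nf → ℝ) × (Fin nv → Fin nu → ℝ))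
  let y := LinearMap.fst ℝ _ _ ∘ₗ w
  let ys := LinearMap.fst ℝ _ _ ∘ₗ LinearMap.snd ℝ _ _ ∘ₗ w
  let v := LinearMap.snd ℝ _ _ ∘ₗ LinearMap.snd ℝ _ _ ∘ₗ w
  exact ((hP.convexOn_dotProduct_mulVec.comp_linearMap x).add
    (hΓ.convexOn_dotProduct_mulVec.comp_linearMap (y - ys))).add
    (ConvexOn.fun_sum convex_univ fun i _ => hΘ.convexOn_dotProduct_mulVec.comp_linearMap
      (LinearMap.proj i ∘ₗ v - mulVecLin K ∘ₗ mulVecLin (V i) ∘ₗ y))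

theorem mcostObjective_nonneg {P : Matrix (Fin n) (Fin n) ℝ} {Γ : Matrix (Fin nf) (Fin nf) ℝ}
    {Θ : Matrix (Fin nu) (Fin nu) ℝ} (hP : P.PosSemidef) (hΓ : Γ.PosSemidef)
    (hΘ : Θ.PosSemidef) (p : (Fin n → ℝ) × (Fin nf → ℝ) × (Fin nf → ℝ) × (Fin nv → Fin nu → ℝ)) :
    0 ≤ mcostObjective K V P Γ Θ p :=
  add_nonneg (add_nonneg (hP.dotProduct_mulVec_nonneg _) (hΓ.dotProduct_mulVec_nonneg _))
    (Finset.sum_nonneg fun _ _ => hΘ.dotProduct_mulVec_nonneg _)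

theorem TSet_eq_fst_image_mcostFeasible (β : ℝ) :
    TSet β A B K X U F E V = Prod.fst '' mcostFeasible A B K X U F E V β := by
  ext x
  constructor
  · rintro ⟨y, ys, v, h⟩
    exact ⟨(x, y, ys, v), h, rfl⟩
  · rintro ⟨⟨x, y, ys, v⟩, h, rfl⟩
    exact ⟨y, ys, v, h⟩

theorem mcost_eq_iInf (β : ℝ) (P : Matrix (Fin n) (Fin n) ℝ) (Γ : Matrix (Fin nf) (Fin nf) ℝ)
    (Θ : Matrix (Fin nu) (Fin nu) ℝ) (x : Fin n → ℝ) :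
    mcost β A B K X U F E V P Γ Θ x =
      ⨅ w : {w // (x, w) ∈ mcostFeasible A B K X U F E V β},
        (mcostObjective K V P Γ Θ (x, w) : EReal) := by
  refine congrArg sInf (Set.ext fun c => ⟨?_, ?_⟩)
  · rintro ⟨y, ys, v, h₁, h₂, h₃, rfl⟩
    exact ⟨⟨(y, ys, v), h₁, h₂, h₃⟩, rfl⟩
  · rintro ⟨⟨⟨y, ys, v⟩, h₁, h₂, h₃⟩, rfl⟩
    exact ⟨y, ys, v, h₁, h₂, h₃, rfl⟩

end TerminalCost

theorem mcost_finite_and_convexOn_general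
    (A : Matrix (Fin n) (Fin n) ℝ) (B : Matrix (Fin n) (Fin nu) ℝ)
    (K : Matrix (Fin nu) (Fin n) ℝ)
    (X : Set (Fin n → ℝ)) (U : Set (Fin nu → ℝ))
    (F : Matrix (Fin nf) (Fin n) ℝ) (E : Matrix (Fin ne) (Fin nf) ℝ)
    (V : Fin nv → Matrix (Fin n) (Fin nf) ℝ)
    (P : Matrix (Fin n) (Fin n) ℝ) (Γ : Matrix (Fin nf) (Fin nf) ℝ)
    (Θ : Matrix (Fin nu) (Fin nu) ℝ)
    (hX : Convex ℝ X) (hU : Convex ℝ U)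
    (β : ℝ)
    (hP : P.PosSemidef) (hΓ : Γ.PosSemidef) (hΘ : Θ.PosSemidef) :
    (∀ x ∈ TSet β A B K X U F E V,
        ∃ r : ℝ, mcost β A B K X U F E V P Γ Θ x = (r : EReal)) ∧
    (∀ x₁ ∈ TSet β A B K X U F E V, ∀ x₂ ∈ TSet β A B K X U F E V,
      ∀ t : ℝ, 0 ≤ t → t ≤ 1 →
        mcost β A B K X U F E V P Γ Θ (t • x₁ + (1 - t) • x₂) ≤
          (t : EReal) * mcost β A B K X U F E V P Γ Θ x₁ +
            ((1 - t : ℝ) : EReal) * mcost β A B K X U F E V P Γ Θ x₂) := by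
  set C := mcostFeasible A B K X U F E V β
  set J := mcostObjective K V P Γ Θ
  let g x := ⨅ w : {w // (x, w) ∈ C}, J (x, w)
  have hbdd : BddBelow (J '' C) :=
    ⟨0, forall_mem_image.2 fun p _ => mcostObjective_nonneg K V hP hΓ hΘ p⟩
  have hg : ConvexOn ℝ (TSet β A B K X U F E V) g := by
    rw [TSet_eq_fst_image_mcostFeasible]
    exact ((convexOn_mcostObjective K V hP hΓ hΘ).subset (subset_univ C)
      (convex_mcostFeasible A B K F E V hX hU β)).iInf_fiber hbdd
  have hm : ∀ x ∈ TSet β A B K X U F E V, mcost β A B K X U F E V P Γ Θ x = g x := by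
    intro x hx
    rw [TSet_eq_fst_image_mcostFeasible] at hx
    obtain ⟨⟨_, w⟩, hw, rfl⟩ := hx
    have : Nonempty {w' // (_, w') ∈ C} := ⟨⟨w, hw⟩⟩
    rw [mcost_eq_iInf, EReal.coe_ciInf (hbdd.range_fiber _)]
  refine ⟨fun x hx => ⟨g x, hm x hx⟩, fun x₁ hx₁ x₂ hx₂ t ht0 ht1 => ?_⟩
  have ht : 0 ≤ 1 - t := sub_nonneg.2 ht1
  rw [hm _ hx₁, hm _ hx₂, hm _ (hg.1 hx₁ hx₂ ht0 ht (add_sub_cancel t 1))]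
  exact_mod_cast hg.2 hx₁ hx₂ ht0 ht (add_sub_cancel t 1)

/-- on `T(β)` the terminal cost `m` is real-valued and convex
(Proposition 2, statement 1). -/
theorem mcost_finite_and_convexOn
    (A : Matrix (Fin n) (Fin n) ℝ) (B : Matrix (Fin n) (Fin nu) ℝ)
    (K : Matrix (Fin nu) (Fin n) ℝ)
    (X : Set (Fin n → ℝ)) (U : Set (Fin nu → ℝ))
    (F : Matrix (Fin nf) (Fin n) ℝ) (E : Matrix (Fin ne) (Fin nf) ℝ)
    (V : Fin nv → Matrix (Fin n) (Fin nf) ℝ)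
    (P : Matrix (Fin n) (Fin n) ℝ) (Γ : Matrix (Fin nf) (Fin nf) ℝ)
    (Θ : Matrix (Fin nu) (Fin nu) ℝ)
    (hX : Convex ℝ X) (hU : Convex ℝ U)
    (β : ℝ) (hβ0 : 0 ≤ β) (hβ1 : β ≤ 1)
    (hP : P.PosSemidef) (hΓ : Γ.PosSemidef) (hΘ : Θ.PosSemidef) :
    (∀ x ∈ TSet β A B K X U F E V,
        ∃ r : ℝ, mcost β A B K X U F E V P Γ Θ x = (r : EReal)) ∧
    (∀ x₁ ∈ TSet β A B K X U F E V, ∀ x₂ ∈ TSet β A B K X U F E V,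
      ∀ t : ℝ, 0 ≤ t → t ≤ 1 →
        mcost β A B K X U F E V P Γ Θ (t • x₁ + (1 - t) • x₂) ≤
          (t : EReal) * mcost β A B K X U F E V P Γ Θ x₁ +
            ((1 - t : ℝ) : EReal) * mcost β A B K X U F E V P Γ Θ x₂) :=
  mcost_finite_and_convexOn_general A B K X U F E V P Γ Θ hX hU β hP hΓ hΘ
end
end

section
/- Suppose β ∈ [0, 1] and P, Γ, Θ are symmetric positive semidefinite. Then for every x ∈ T̂_LQR, m(x) = xᵀPx. (Proposition 2, statement 4: the terminal cost coincides with the LQR quadratic value function on T̂_LQR.) -/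
open Matrix

noncomputable section

variable {n nu nf ne nv : ℕ}

/-! Taking `y = y_s` and `v_i = K V_i y_s` makes both penalty terms vanish, and the triple is
feasible because `y_s ∈ Y_LQR` says precisely that the LQR feedback keeps `P(y_s)` invariant.
Positive semidefiniteness of `Γ` and `Θ` bounds every other candidate cost below by `xᵀPx`. -/

theorem mem_STriple_of_mem_YLQR {A : Matrix (Fin n) (Fin n) ℝ} {B : Matrix (Fin n) (Fin nu) ℝ}
    {K : Matrix (Fin nu) (Fin n) ℝ} {X : Set (Fin n → ℝ)} {U : Set (Fin nu → ℝ)}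
    {F : Matrix (Fin nf) (Fin n) ℝ} {E : Matrix (Fin ne) (Fin nf) ℝ}
    {V : Fin nv → Matrix (Fin n) (Fin nf) ℝ} {ys : Fin nf → ℝ}
    (hys : ys ∈ YLQR A B K X U F E V) :
    (ys, fun i => K *ᵥ (V i *ᵥ ys), ys) ∈ STriple A B X U F E V := by
  obtain ⟨hE, hinv⟩ := hys
  refine ⟨hE, fun i => ?_⟩
  obtain ⟨hF, hX, hU⟩ := hinv i
  refine ⟨?_, hX, hU⟩
  rwa [add_mulVec, ← mulVec_mulVec] at hF

theorem mcost_le_of_mem_THatLQR (β : ℝ) {A : Matrix (Fin n) (Fin n) ℝ}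
    {B : Matrix (Fin n) (Fin nu) ℝ} {K : Matrix (Fin nu) (Fin n) ℝ} {X : Set (Fin n → ℝ)}
    {U : Set (Fin nu → ℝ)} {F : Matrix (Fin nf) (Fin n) ℝ} {E : Matrix (Fin ne) (Fin nf) ℝ}
    {V : Fin nv → Matrix (Fin n) (Fin nf) ℝ} (P : Matrix (Fin n) (Fin n) ℝ)
    (Γ : Matrix (Fin nf) (Fin nf) ℝ) (Θ : Matrix (Fin nu) (Fin nu) ℝ) {x : Fin n → ℝ}
    (hx : x ∈ THatLQR A B K X U F E V) :
    mcost β A B K X U F E V P Γ Θ x ≤ ((x ⬝ᵥ (P *ᵥ x) : ℝ) : EReal) := by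
  obtain ⟨ys, hys, hFx⟩ := hx
  refine sInf_le ⟨ys, ys, fun i => K *ᵥ (V i *ᵥ ys), hFx, hys, ?_, ?_⟩
  · simpa using mem_STriple_of_mem_YLQR hys
  · simp

theorem quadratic_le_mcost (β : ℝ) (A : Matrix (Fin n) (Fin n) ℝ)
    (B : Matrix (Fin n) (Fin nu) ℝ) (K : Matrix (Fin nu) (Fin n) ℝ) (X : Set (Fin n → ℝ))
    (U : Set (Fin nu → ℝ)) (F : Matrix (Fin nf) (Fin n) ℝ) (E : Matrix (Fin ne) (Fin nf) ℝ)
    (V : Fin nv → Matrix (Fin n) (Fin nf) ℝ) (P : Matrix (Fin n) (Fin n) ℝ)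
    {Γ : Matrix (Fin nf) (Fin nf) ℝ} {Θ : Matrix (Fin nu) (Fin nu) ℝ}
    (hΓ : Γ.PosSemidef) (hΘ : Θ.PosSemidef) (x : Fin n → ℝ) :
    ((x ⬝ᵥ (P *ᵥ x) : ℝ) : EReal) ≤ mcost β A B K X U F E V P Γ Θ x := by
  refine le_sInf ?_
  rintro _ ⟨y, ys, vv, -, -, -, rfl⟩
  have hΓy : 0 ≤ (y - ys) ⬝ᵥ (Γ *ᵥ (y - ys)) := by
    simpa using hΓ.dotProduct_mulVec_nonneg (y - ys)
  have hΘv : 0 ≤ ∑ i, (vv i - K *ᵥ (V i *ᵥ y)) ⬝ᵥ (Θ *ᵥ (vv i - K *ᵥ (V i *ᵥ y))) :=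
    Finset.sum_nonneg fun i _ => by
      simpa using hΘ.dotProduct_mulVec_nonneg (vv i - K *ᵥ (V i *ᵥ y))
  exact EReal.coe_le_coe_iff.mpr (by linarith)

theorem mcost_eq_quadratic_on_THatLQR_general
    (A : Matrix (Fin n) (Fin n) ℝ) (B : Matrix (Fin n) (Fin nu) ℝ)
    (K : Matrix (Fin nu) (Fin n) ℝ)
    (X : Set (Fin n → ℝ)) (U : Set (Fin nu → ℝ))
    (F : Matrix (Fin nf) (Fin n) ℝ) (E : Matrix (Fin ne) (Fin nf) ℝ)
    (V : Fin nv → Matrix (Fin n) (Fin nf) ℝ)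
    (P : Matrix (Fin n) (Fin n) ℝ) (Γ : Matrix (Fin nf) (Fin nf) ℝ)
    (Θ : Matrix (Fin nu) (Fin nu) ℝ)
    (β : ℝ)
    (hΓ : Γ.PosSemidef) (hΘ : Θ.PosSemidef) :
    ∀ x ∈ THatLQR A B K X U F E V,
      mcost β A B K X U F E V P Γ Θ x = ((x ⬝ᵥ (P *ᵥ x) : ℝ) : EReal) := fun x hx =>
  (mcost_le_of_mem_THatLQR β P Γ Θ hx).antisymm
    (quadratic_le_mcost β A B K X U F E V P hΓ hΘ x)

/-- on `T̂_LQR` the terminal cost equals the LQR quadratic value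
function (Proposition 2, statement 4). -/
theorem mcost_eq_quadratic_on_THatLQR
    (A : Matrix (Fin n) (Fin n) ℝ) (B : Matrix (Fin n) (Fin nu) ℝ)
    (K : Matrix (Fin nu) (Fin n) ℝ)
    (X : Set (Fin n → ℝ)) (U : Set (Fin nu → ℝ))
    (F : Matrix (Fin nf) (Fin n) ℝ) (E : Matrix (Fin ne) (Fin nf) ℝ)
    (V : Fin nv → Matrix (Fin n) (Fin nf) ℝ)
    (P : Matrix (Fin n) (Fin n) ℝ) (Γ : Matrix (Fin nf) (Fin nf) ℝ)
    (Θ : Matrix (Fin nu) (Fin nu) ℝ)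
    (β : ℝ) (hβ0 : 0 ≤ β) (hβ1 : β ≤ 1)
    (hP : P.PosSemidef) (hΓ : Γ.PosSemidef) (hΘ : Θ.PosSemidef) :
    ∀ x ∈ THatLQR A B K X U F E V,
      mcost β A B K X U F E V P Γ Θ x = ((x ⬝ᵥ (P *ᵥ x) : ℝ) : EReal) :=
  mcost_eq_quadratic_on_THatLQR_general A B K X U F E V P Γ Θ β hΓ hΘ
end
end
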